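/- For λ, μ ∈ ℂ with λ, μ ∉ ℤ, the formulas L_{r,s}·v_{m,n} = ((μ+n+s+1)/(μ+n))(r+λ+m)v_{m+r,n+s+1} + ((λ+m+r)/(λ+m))(s+μ+n)v_{m+r,n+s} define a representation of the centerless non-graded Virasoro-like algebra on ⊕_{m,n∈ℤ} ℂv_{m,n}. -/
import Mathlib

set_option maxHeartbeats 1000000

private lemma cfA2 (A B H K R S c : ℂ) (d1 : B ≠ 0) (d2 : B + S + 1 ≠ 0) (d4 : B + K + 1 ≠ 0) :
    (B + S + 1) / B * (R + A) * c * ((B + S + 1 + K + 1) / (B + S + 1) * (H + A + R))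
      - (B + K + 1) / B * (H + A) * c * ((B + K + 1 + S + 1) / (B + K + 1) * (R + A + H))
      = (R - H) * ((B + K + S + 2) / B * (H + R + A) * c) := by
  field_simp
  ring

private lemma cfA0 (A B H K R S c : ℂ) (d6 : A ≠ 0) (d7 : A + R ≠ 0) (d8 : A + H ≠ 0) :
    (A + R) / A * (S + B) * c * ((A + R + H) / (A + R) * (K + B + S))
      - (A + H) / A * (K + B) * c * ((A + H + R) / (A + H) * (S + B + K))
      = (S - K) * ((A + H + R) / A * (K + S + B) * c) := by
  field_simp
  ring

private lemma cfA1 (A B H K R S c : ℂ) (d1 : B ≠ 0) (d3 : B + S ≠ 0) (d5 : B + K ≠ 0)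
    (d6 : A ≠ 0) (d7 : A + R ≠ 0) (d8 : A + H ≠ 0) :
    (B + S + 1) / B * (R + A) * c * ((A + R + H) / (A + R) * (K + B + S + 1))
      + (A + R) / A * (S + B) * c * ((B + S + K + 1) / (B + S) * (H + A + R))
      - ((B + K + 1) / B * (H + A) * c * ((A + H + R) / (A + H) * (S + B + K + 1))
        + (A + H) / A * (K + B) * c * ((B + K + S + 1) / (B + K) * (R + A + H)))
      = (R - H) * ((A + H + R) / A * (K + S + 1 + B) * c)
        + (S - K) * ((B + K + S + 1) / B * (H + R + A) * c) := by
  field_simp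
  ring

/-- The action L_{r,s}·v_{m,n} = ((μ+n+s+1)/(μ+n))(r+λ+m)v_{m+r,n+s+1}
+ ((λ+m+r)/(λ+m))(s+μ+n)v_{m+r,n+s}, as a linear endomorphism. -/
noncomputable def actA1 (lam mu : ℂ) (r s : ℤ) :
    Module.End ℂ ((ℤ × ℤ) →₀ ℂ) :=
  Finsupp.lsum ℂ fun p : ℤ × ℤ =>
    ((mu + (p.2 : ℂ) + (s : ℂ) + 1) / (mu + (p.2 : ℂ)) * ((r : ℂ) + lam + (p.1 : ℂ)))
        • Finsupp.lsingle (p.1 + r, p.2 + s + 1)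
      + ((lam + (p.1 : ℂ) + (r : ℂ)) / (lam + (p.1 : ℂ)) * ((s : ℂ) + mu + (p.2 : ℂ)))
        • Finsupp.lsingle (p.1 + r, p.2 + s)

private lemma actA1_single (lam mu : ℂ) (r s m n : ℤ) (c : ℂ) :
    actA1 lam mu r s (Finsupp.single (m, n) c)
      = ((mu + (n:ℂ) + s + 1) / (mu + n) * ((r:ℂ) + lam + m) * c)
          • Finsupp.single (m + r, n + s + 1) 1
        + ((lam + (m:ℂ) + r) / (lam + m) * ((s:ℂ) + mu + n) * c)
          • Finsupp.single (m + r, n + s) 1 := by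
  simp [actA1, Finsupp.smul_single, mul_comm]

/-- The module A_{1,λ,μ} (λ, μ ∉ ℤ): the formulas define a representation
of the centerless non-graded Virasoro-like algebra. -/
theorem stmt_6 (lam mu : ℂ)
    (hlam : lam ∉ Set.range ((↑·) : ℤ → ℂ))
    (hmu : mu ∉ Set.range ((↑·) : ℤ → ℂ)) :
    ∀ h k r s : ℤ,
      ⁅actA1 lam mu h k, actA1 lam mu r s⁆
        = ((r - h : ℤ) : ℂ) • actA1 lam mu (h + r) (k + s + 1)
          + ((s - k : ℤ) : ℂ) • actA1 lam mu (h + r) (k + s) := by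
  intro h k r s
  have hl : ∀ m : ℤ, lam + (m:ℂ) ≠ 0 := fun m hm =>
    hlam ⟨-m, by push_cast; linear_combination -hm⟩
  have hm : ∀ n : ℤ, mu + (n:ℂ) ≠ 0 := fun n hn =>
    hmu ⟨-n, by push_cast; linear_combination -hn⟩
  apply Finsupp.lhom_ext
  rintro ⟨m, n⟩ c
  simp only [LieRing.of_associative_ring_bracket, LinearMap.sub_apply,
    Module.End.mul_apply, LinearMap.add_apply, LinearMap.smul_apply,
    LinearMap.comp_apply, Finsupp.lsingle_apply, actA1_single, map_add,
    map_smul, smul_add, smul_smul]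
  have d1 : mu + (↑n : ℂ) ≠ 0 := hm n
  have d2 : mu + (↑n : ℂ) + ↑s + 1 ≠ 0 := by
    intro hc; exact hm (n + s + 1) (by push_cast; linear_combination hc)
  have d3 : mu + (↑n : ℂ) + ↑s ≠ 0 := by
    intro hc; exact hm (n + s) (by push_cast; linear_combination hc)
  have d4 : mu + (↑n : ℂ) + ↑k + 1 ≠ 0 := by
    intro hc; exact hm (n + k + 1) (by push_cast; linear_combination hc)
  have d5 : mu + (↑n : ℂ) + ↑k ≠ 0 := by
    intro hc; exact hm (n + k) (by push_cast; linear_combination hc)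
  have d6 : lam + (↑m : ℂ) ≠ 0 := hl m
  have d7 : lam + (↑m : ℂ) + ↑r ≠ 0 := by
    intro hc; exact hl (m + r) (by push_cast; linear_combination hc)
  have d8 : lam + (↑m : ℂ) + ↑h ≠ 0 := by
    intro hc; exact hl (m + h) (by push_cast; linear_combination hc)
  ext ⟨q1, q2⟩
  simp only [Finsupp.coe_add, Finsupp.coe_sub, Finsupp.coe_smul, Pi.add_apply,
    Pi.sub_apply, Pi.smul_apply, Finsupp.single_apply, smul_eq_mul, mul_one,
    mul_ite, mul_zero, Prod.mk.injEq]
  push_cast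
  simp only [show m+r+h = m+h+r from by ring, show m+(h+r) = m+h+r from by ring,
    show n+s+1+k+1 = n+k+s+2 from by ring, show n+s+1+k = n+k+s+1 from by ring,
    show n+s+k+1 = n+k+s+1 from by ring, show n+k+1+s+1 = n+k+s+2 from by ring,
    show n+k+1+s = n+k+s+1 from by ring, show n+(k+s+1)+1 = n+k+s+2 from by ring,
    show n+(k+s+1) = n+k+s+1 from by ring, show n+(k+s)+1 = n+k+s+1 from by ring,
    show n+(k+s) = n+k+s from by ring, show n+s+k = n+k+s from by ring]
  split_ifs with h1 h2 h3 h4 h5 h6 h7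
  · exfalso; omega
  · exfalso; omega
  · exfalso; omega
  · linear_combination cfA2 (lam + (m:ℂ)) (mu + (n:ℂ)) h k r s c d1 d2 d4
  · exfalso; omega
  · linear_combination cfA1 (lam + (m:ℂ)) (mu + (n:ℂ)) h k r s c d1 d3 d5 d6 d7 d8
  · linear_combination cfA0 (lam + (m:ℂ)) (mu + (n:ℂ)) h k r s c d6 d7 d8
  · ring
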